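/- The infinite word w = (001011)^ω = 001011001011⋯ over Σ₂ = {0,1} has the property that if x is a subword of w with |x| ≥ 5, then x^R is not a subword of w. -/

import Mathlib

/-- `x` occurs as a contiguous block of consecutive letters of the infinite word `w`. -/
def IsFactor {α : Type*} (x : List α) (w : ℕ → α) : Prop :=
  ∃ i : ℕ, x = (List.range x.length).map fun j => w (i + j)

/-- The periodic infinite word `y^ω = yyy⋯`. -/
def powOmega {α : Type*} (y : List α) (h : y ≠ []) : ℕ → α :=
  fun n => y[n % y.length]'(Nat.mod_lt n (List.length_pos_iff.mpr h))

lemma isFactor_of_infix {α : Type*} {x y : List α} {w : ℕ → α}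
    (hx : IsFactor x w) (hyx : y <:+: x) : IsFactor y w := by
  obtain ⟨i, hi⟩ := hx
  obtain ⟨s, t, hst⟩ := hyx
  subst hst
  refine ⟨i + s.length, ?_⟩
  apply List.ext_getElem (by simp)
  intro j hj hj'
  have hj2 : j < y.length := by simpa using hj
  have h1 := List.getElem_of_eq hi (show s.length + j < (s ++ y ++ t).length by
    simp; omega)
  simp only [List.getElem_map, List.getElem_range] at h1
  have h2 : (s ++ y ++ t)[s.length + j]'(by simp; omega) = y[j] := by
    rw [List.getElem_append_left (by simp; omega)]
    rw [List.getElem_append_right (by omega)]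
    congr 1
    omega
  rw [← h2, h1]
  simp [Nat.add_assoc]

abbrev W : ℕ → Fin 2 := powOmega ([0, 0, 1, 0, 1, 1] : List (Fin 2)) (by simp)

abbrev L : List (List (Fin 2)) :=
  [[0,0,1,0,1],[0,1,0,1,1],[1,0,1,1,0],[0,1,1,0,0],[1,1,0,0,1],[1,0,0,1,0]]

lemma mem_L {t : List (Fin 2)} (h5 : t.length = 5) (ht : IsFactor t W) : t ∈ L := by
  obtain ⟨i, hi⟩ := ht
  rw [h5] at hi
  obtain ⟨r, hr6, hir⟩ : ∃ r, r < 6 ∧ i % 6 = r := ⟨i % 6, by omega, rfl⟩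
  have hW : ∀ k, W (i + k) =
      [0,0,1,0,1,1][(r + k) % 6]'(by
        have : (r + k) % 6 < 6 := Nat.mod_lt _ (by norm_num)
        simpa using this) := by
    intro k
    show ([0,0,1,0,1,1] : List (Fin 2))[(i+k) % 6]'(by
      have : (i + k) % 6 < 6 := Nat.mod_lt _ (by norm_num)
      simpa using this) = _
    congr 1
    omega
  have hi' : t = [W (i+0), W (i+1), W (i+2), W (i+3), W (i+4)] := by
    simpa [List.range_succ] using hi
  rw [hW 0, hW 1, hW 2, hW 3, hW 4] at hi'
  interval_cases r <;> norm_num at hi' <;> rw [hi'] <;> decide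

/-- If `x` is a subword of `(001011)^ω` with `|x| ≥ 5`, then `x^R` is not a subword. -/
theorem stmt_10 :
    ∀ x : List (Fin 2),
      IsFactor x (powOmega ([0, 0, 1, 0, 1, 1] : List (Fin 2)) (by simp)) →
      5 ≤ x.length →
      ¬ IsFactor x.reverse (powOmega ([0, 0, 1, 0, 1, 1] : List (Fin 2)) (by simp)) := by
  intro x hx hlen hxr
  have h5 : (x.take 5).length = 5 := by simp; omega
  have ht1 : IsFactor (x.take 5) W := isFactor_of_infix hx (x.take_prefix 5).isInfix
  have ht2 : IsFactor (x.take 5).reverse W := by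
    apply isFactor_of_infix hxr
    exact List.reverse_infix.mpr (x.take_prefix 5).isInfix
  have m1 := mem_L h5 ht1
  have m2 := mem_L (by simp [h5]) ht2
  simp only [L, List.mem_cons, List.not_mem_nil, or_false] at m1 m2
  rcases m1 with h|h|h|h|h|h <;> rw [h] at m2 <;> revert m2 <;> decide
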